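/- Let X be a sampling set for PW_1(ℝ) with lower frame bound A > 0, and suppose Δ_X := inf over nonzero finitely supported Gaussian-integer sequences n of dist(n, Range(C_X)) is positive. Then for every h ∈ PW_1(ℝ) satisfying ‖M_{1,X} h‖_{ℓ²} < 2Δ_X, one has M_{1,X} h = C_X h as sequences, and consequently ‖h‖_{L²} ≤ A^{-1/2} ‖M_{1,X} h‖_{ℓ²}. -/

import Mathlib

open MeasureTheory Real

/-!
Folding with threshold `1` changes a complex number by an element of `2(ℤ + iℤ)` and fixes
every number of modulus `< 1`. As `Δ_X > 0`, the samples of `h` are square-summable (a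
divergent series would have the junk sum `0` and put `0` into the set defining `Δ_X`), so
`C_X h - M_{1,X} h = 2n` with `n` a finitely supported Gaussian-integer sequence. If `n ≠ 0`,
then `n - C_X (h/2) = -M_{1,X} h / 2` has norm `< Δ_X`, contradicting the definition of `Δ_X`.
Hence `M_{1,X} h = C_X h`, and the lower frame bound gives the norm estimate.
-/

/-- The Paley–Wiener space of bandwidth `Ω`. -/
def PW (Ω : ℝ) : Set (ℝ → ℂ) :=
  {f | ∃ g : ℝ → ℂ, MeasureTheory.MemLp g 2 volume ∧
    (∀ ξ : ℝ, ξ ∉ Set.Icc (-(Ω/2)) (Ω/2) → g ξ = 0) ∧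
    ∀ x : ℝ, f x = ∫ ξ : ℝ, g ξ * Complex.exp (2 * Real.pi * Complex.I * x * ξ)}

/-- Centered λ-folding of a real number. -/
noncomputable def fold (lam x : ℝ) : ℝ :=
  2 * lam * (Int.fract (x / (2 * lam) + 1 / 2) - 1 / 2)

/-- Componentwise centered λ-folding of a complex number. -/
noncomputable def foldC (lam : ℝ) (z : ℂ) : ℂ :=
  (fold lam z.re : ℂ) + (fold lam z.im : ℂ) * Complex.I

/-- A finitely supported complex sequence is Gaussian-integer valued. -/
def IsGaussian (n : ℤ →₀ ℂ) : Prop := ∀ k : ℤ, ∃ a b : ℤ, n k = (a : ℂ) + (b : ℂ) * Complex.I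

open Filter

section Folding

variable {lam : ℝ}

lemma fold_eq_sub_floor (hlam : lam ≠ 0) (t : ℝ) :
    fold lam t = t - 2 * lam * ⌊t / (2 * lam) + 1 / 2⌋ := by
  rw [fold, Int.fract]
  field_simp
  ring

lemma fold_eq_self_of_abs_lt {t : ℝ} (ht : |t| < lam) : fold lam t = t := by
  have hlam : 0 < lam := (abs_nonneg t).trans_lt ht
  obtain ⟨hlo, hhi⟩ := abs_lt.mp ht
  have hfloor : ⌊t / (2 * lam) + 1 / 2⌋ = 0 := by
    rw [Int.floor_eq_zero_iff, Set.mem_Ico]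
    constructor
    · have : -(1 / 2) ≤ t / (2 * lam) := by rw [le_div_iff₀ (by positivity)]; linarith
      linarith
    · have : t / (2 * lam) < 1 / 2 := by rw [div_lt_iff₀ (by positivity)]; linarith
      linarith
  rw [fold_eq_sub_floor hlam.ne', hfloor]
  simp

lemma abs_fold_le (hlam : 0 < lam) (t : ℝ) : |fold lam t| ≤ lam := by
  have h0 := Int.fract_nonneg (t / (2 * lam) + 1 / 2)
  have h1 := Int.fract_lt_one (t / (2 * lam) + 1 / 2)
  rw [fold, abs_le]
  constructor <;> nlinarith

lemma abs_fold_le_abs (hlam : 0 < lam) (t : ℝ) : |fold lam t| ≤ |t| := by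
  rcases lt_or_ge |t| lam with ht | ht
  · rw [fold_eq_self_of_abs_lt ht]
  · exact (abs_fold_le hlam t).trans ht

lemma foldC_eq_self_of_norm_lt {z : ℂ} (hz : ‖z‖ < lam) : foldC lam z = z := by
  rw [foldC, fold_eq_self_of_abs_lt ((Complex.abs_re_le_norm z).trans_lt hz),
    fold_eq_self_of_abs_lt ((Complex.abs_im_le_norm z).trans_lt hz), Complex.re_add_im]

lemma norm_foldC_le (hlam : 0 < lam) (z : ℂ) : ‖foldC lam z‖ ≤ ‖z‖ := by
  have hre := sq_le_sq.mpr (abs_fold_le_abs hlam z.re)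
  have him := sq_le_sq.mpr (abs_fold_le_abs hlam z.im)
  rw [Complex.norm_def, Complex.norm_def, foldC, Complex.normSq_add_mul_I, Complex.normSq_apply]
  exact Real.sqrt_le_sqrt (by nlinarith)

lemma sub_foldC_eq (hlam : lam ≠ 0) (z : ℂ) :
    z - foldC lam z = 2 * lam *
      ((⌊z.re / (2 * lam) + 1 / 2⌋ : ℂ) + ⌊z.im / (2 * lam) + 1 / 2⌋ * Complex.I) := by
  rw [foldC, fold_eq_sub_floor hlam, fold_eq_sub_floor hlam]
  push_cast
  linear_combination -Complex.re_add_im z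

lemma finite_support_sub_foldC {ι : Type*} {z : ι → ℂ} (hz : ∀ᶠ k in cofinite, ‖z k‖ < lam) :
    (Function.support fun k => z k - foldC lam (z k)).Finite :=
  eventually_cofinite.mp <| hz.mono fun _ hk => sub_eq_zero.mpr (foldC_eq_self_of_norm_lt hk).symm

end Folding

lemma const_mul_mem_PW {Ω : ℝ} {f : ℝ → ℂ} (c : ℂ) (hf : f ∈ PW Ω) :
    (fun t => c * f t) ∈ PW Ω := by
  obtain ⟨g, hg, hsupp, hfg⟩ := hf
  refine ⟨fun ξ => c * g ξ, hg.const_mul c, fun ξ hξ => by simp [hsupp ξ hξ], fun t => ?_⟩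
  simp only [hfg t, ← integral_const_mul, mul_assoc]

lemma sqrt_tsum_norm_mul_sq {ι 𝕜 : Type*} [NormedDivisionRing 𝕜] (c : 𝕜) (w : ι → 𝕜) :
    √(∑' k, ‖c * w k‖ ^ 2) = ‖c‖ * √(∑' k, ‖w k‖ ^ 2) := by
  simp only [norm_mul, mul_pow, tsum_mul_left, Real.sqrt_mul (sq_nonneg _),
    Real.sqrt_sq (norm_nonneg _)]

lemma le_rpow_neg_half_mul_sqrt {A t S : ℝ} (hA : 0 < A) (ht : 0 ≤ t) (h : A * t ^ 2 ≤ S) :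
    t ≤ A ^ (-(1 / 2) : ℝ) * √S := by
  rw [Real.rpow_neg hA.le, ← Real.sqrt_eq_rpow, inv_mul_eq_div,
    le_div_iff₀ (Real.sqrt_pos.mpr hA)]
  calc t * √A = √(A * t ^ 2) := by rw [Real.sqrt_mul hA.le, Real.sqrt_sq ht, mul_comm]
    _ ≤ √S := Real.sqrt_le_sqrt h

section GaussianDistance

variable {x : ℤ → ℝ}

/-- `Δ_X` is the infimum of this set. -/
def gaussianDistances (x : ℤ → ℝ) : Set ℝ :=
  {r : ℝ | ∃ n : ℤ →₀ ℂ, ∃ f ∈ PW 1, IsGaussian n ∧ n ≠ 0 ∧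
    r = Real.sqrt (∑' k : ℤ, ‖(n k : ℂ) - f (x k)‖ ^ 2)}

lemma sInf_gaussianDistances_le {r : ℝ} (hr : r ∈ gaussianDistances x) :
    sInf (gaussianDistances x) ≤ r :=
  csInf_le ⟨0, by rintro _ ⟨-, -, -, -, -, rfl⟩; exact Real.sqrt_nonneg _⟩ hr

lemma isGaussian_single_one (k₀ : ℤ) : IsGaussian (Finsupp.single k₀ 1) := by
  intro k
  by_cases hk : k₀ = k
  · exact ⟨1, 0, by simp [hk]⟩
  · exact ⟨0, 0, by simp [Finsupp.single_eq_of_ne' hk]⟩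

lemma summable_sq_norm_samples (hΔ : 0 < sInf (gaussianDistances x)) {f : ℝ → ℂ}
    (hf : f ∈ PW 1) : Summable fun k => ‖f (x k)‖ ^ 2 := by
  by_contra hdiv
  set n : ℤ →₀ ℂ := Finsupp.single 0 1
  have hdiv_sub : ¬ Summable fun k => ‖n k - f (x k)‖ ^ 2 := by
    refine fun hs => hdiv (hs.congr_cofinite ?_)
    refine (Set.finite_singleton (0 : ℤ)).subset fun k hk => ?_
    by_contra hk0
    exact hk (by simp [n, Finsupp.single_eq_of_ne' (Ne.symm hk0)])
  have hmem : 0 ∈ gaussianDistances x := ⟨n, f, hf, isGaussian_single_one 0,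
    by simp [n], by rw [tsum_eq_zero_of_not_summable hdiv_sub, Real.sqrt_zero]⟩
  exact hΔ.not_ge (sInf_gaussianDistances_le hmem)

theorem foldC_samples_eq_self {h : ℝ → ℂ} (hh : h ∈ PW 1)
    (hsmall : √(∑' k, ‖foldC 1 (h (x k))‖ ^ 2) < 2 * sInf (gaussianDistances x)) (k : ℤ) :
    foldC 1 (h (x k)) = h (x k) := by
  have hΔ : 0 < sInf (gaussianDistances x) := by
    linarith [Real.sqrt_nonneg (∑' k, ‖foldC 1 (h (x k))‖ ^ 2)]
  have hsamples_lt_one : ∀ᶠ k in cofinite, ‖h (x k)‖ < 1 :=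
    ((summable_sq_norm_samples hΔ hh).tendsto_cofinite_zero.eventually_lt_const one_pos).mono
      fun _ hk => (sq_lt_one_iff₀ (norm_nonneg _)).mp hk
  set n : ℤ →₀ ℂ := Finsupp.ofSupportFinite (fun k => (h (x k) - foldC 1 (h (x k))) / 2)
    ((finite_support_sub_foldC hsamples_lt_one).subset fun k hk h0 => hk (by simp [h0]))
  by_contra hk
  have hn : n ≠ 0 := fun h0 => hk <| by
    have := DFunLike.congr_fun h0 k
    simp only [n, Finsupp.ofSupportFinite_coe, Finsupp.coe_zero, Pi.zero_apply] at this
    linear_combination (-2 : ℂ) * this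
  have hgauss : IsGaussian n := fun k =>
    ⟨⌊(h (x k)).re / 2 + 1 / 2⌋, ⌊(h (x k)).im / 2 + 1 / 2⌋, by
      simp only [n, Finsupp.ofSupportFinite_coe, sub_foldC_eq one_ne_zero, Complex.ofReal_one, mul_one]
      ring⟩
  have hmem : 1 / 2 * √(∑' k, ‖foldC 1 (h (x k))‖ ^ 2) ∈ gaussianDistances x := by
    refine ⟨n, fun t => 1 / 2 * h t, const_mul_mem_PW _ hh, hgauss, hn, ?_⟩
    rw [show (1 / 2 : ℝ) = ‖(-1 / 2 : ℂ)‖ by norm_num, ← sqrt_tsum_norm_mul_sq]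
    congr! 5 with k
    simp only [n, Finsupp.ofSupportFinite_coe]
    ring
  linarith [sInf_gaussianDistances_le hmem]

end GaussianDistance

theorem stmt14 (A : ℝ) (hA : 0 < A) (x : ℤ → ℝ)
    (hframe : ∀ f ∈ PW 1,
      A * ((eLpNorm f 2 volume).toReal) ^ 2 ≤ ∑' k : ℤ, ‖f (x k)‖ ^ 2)
    (Δ : ℝ)
    (hΔdef : Δ = sInf {r : ℝ | ∃ n : ℤ →₀ ℂ, ∃ f ∈ PW 1, IsGaussian n ∧ n ≠ 0 ∧
      r = Real.sqrt (∑' k : ℤ, ‖(n k : ℂ) - f (x k)‖ ^ 2)})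
    (h : ℝ → ℂ) (hh : h ∈ PW 1)
    (hsmall : Real.sqrt (∑' k : ℤ, ‖foldC 1 (h (x k))‖ ^ 2) < 2 * Δ) :
    (∀ k : ℤ, foldC 1 (h (x k)) = h (x k)) ∧
    (eLpNorm h 2 volume).toReal ≤
      A ^ (-(1/2) : ℝ) * Real.sqrt (∑' k : ℤ, ‖foldC 1 (h (x k))‖ ^ 2) := by
  rw [hΔdef] at hsmall
  have hfold := foldC_samples_eq_self hh hsmall
  refine ⟨hfold, ?_⟩
  simp only [hfold]
  exact le_rpow_neg_half_mul_sqrt hA ENNReal.toReal_nonneg (hframe h hh)
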